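/- arXiv:2306.17409 — 2 statements merged into one kernel-verified Lean document; each statement's English description precedes it below -/
import Mathlib

section
/- Let A be a graded-commutative differential algebra over ℝ with differential d. Define a bracket on homogeneous elements by [α, β] = (−1)^a d(αβ) for α ∈ A_a, β ∈ A_b, and assign to elements of A_a the shifted degree −(a+1). Then: (1) [A_a, A_b] ⊆ A_{a+b+1}, so the bracket shifts the assigned degrees additively; (2) [α, β] + (−1)^{(a+1)(b+1)} [β, α] = 0 for all α ∈ A_a, β ∈ A_b; (3) (−1)^{(a+1)(c+1)}[[α,β],γ] + (−1)^{(b+1)(a+1)}[[β,γ],α] + (−1)^{(c+1)(b+1)}[[γ,α],β] = 0 for all α ∈ A_a, β ∈ A_b, γ ∈ A_c. In other words, A with this bracket and grading is a ℤ-graded Lie superalgebra over ℝ. -/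
/-- A graded-commutative differential algebra over ℝ. -/
structure GradedCommDiffAlgebra (A : Type*) [Ring A] [Algebra ℝ A] where
  grading : ℕ → Submodule ℝ A
  internal : DirectSum.IsInternal grading
  mul_mem : ∀ a b : ℕ, ∀ x ∈ grading a, ∀ y ∈ grading b, x * y ∈ grading (a + b)
  comm : ∀ (a b : ℕ) (x y : A), x ∈ grading a → y ∈ grading b →
    x * y = ((-1 : ℝ) ^ (a * b)) • (y * x)
  d : A →ₗ[ℝ] A
  d_grade : ∀ j : ℕ, ∀ x ∈ grading j, d x ∈ grading (j + 1)
  d_d : ∀ x : A, d (d x) = 0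
  leibniz : ∀ (a : ℕ) (x y : A), x ∈ grading a →
    d (x * y) = d x * y + ((-1 : ℝ) ^ a) • (x * d y)

/-- The bracket `[α, β] = (−1)^a d(αβ)` for `α` of form-degree `a`. -/
def GradedCommDiffAlgebra.br {A : Type*} [Ring A] [Algebra ℝ A]
    (G : GradedCommDiffAlgebra A) (a : ℕ) (x y : A) : A :=
  ((-1 : ℝ) ^ a) • G.d (x * y)

/-!
Since `d(αβ)` is closed, the Leibniz rule gives `[[α, β], γ] = (−1)^a d(αβ dγ)`. The signed cyclic
sum of the terms `αβ dγ` occurring in the Jacobi identity is, after graded commutation, a sign times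
`d(αβγ)`; so the Jacobiator is `± d(d(αβγ)) = 0`. Antisymmetry is graded commutativity of `αβ`.
-/

namespace GradedCommDiffAlgebra

variable {A : Type*} [Ring A] [Algebra ℝ A] (G : GradedCommDiffAlgebra A)
  {a b c j : ℕ} {α β γ x : A}

theorem br_mem (hα : α ∈ G.grading a) (hβ : β ∈ G.grading b) :
    G.br a α β ∈ G.grading (a + b + 1) :=
  Submodule.smul_mem _ _ (G.d_grade _ _ (G.mul_mem a b α hα β hβ))

theorem br_add_smul_br (hα : α ∈ G.grading a) (hβ : β ∈ G.grading b) :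
    G.br a α β + ((-1 : ℝ) ^ ((a + 1) * (b + 1))) • G.br b β α = 0 := by
  simp only [br, G.comm b a β α hβ hα, map_smul, smul_smul, ← add_smul, ← pow_add]
  have sign : (-1 : ℝ) ^ ((a + 1) * (b + 1) + (b + b * a)) = -(-1) ^ a := by
    rw [neg_one_pow_congr (n := a + 1) (by grind), pow_succ, mul_neg_one]
  rw [sign, add_neg_cancel, zero_smul]

theorem d_mul_d (hx : x ∈ G.grading j) (y : A) : G.d (x * G.d y) = G.d x * G.d y := by
  rw [G.leibniz j x _ hx, G.d_d, mul_zero, smul_zero, add_zero]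

theorem d_d_mul (hx : x ∈ G.grading j) (y : A) :
    G.d (G.d x * y) = ((-1 : ℝ) ^ (j + 1)) • (G.d x * G.d y) := by
  rw [G.leibniz (j + 1) _ y (G.d_grade j x hx), G.d_d, zero_mul, zero_add]

theorem br_br (hα : α ∈ G.grading a) (hβ : β ∈ G.grading b) (γ : A) :
    G.br (a + b + 1) (G.br a α β) γ = ((-1 : ℝ) ^ a) • G.d (α * β * G.d γ) := by
  have hαβ := G.mul_mem a b α hα β hβ
  rw [br, br, smul_mul_assoc, map_smul, G.d_d_mul hαβ, G.d_mul_d hαβ, smul_smul, smul_smul,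
    ← pow_add, ← pow_add, neg_one_pow_congr (n := a) (by grind)]

theorem d_mul_mul (hα : α ∈ G.grading a) (hβ : β ∈ G.grading b) (hγ : γ ∈ G.grading c) :
    G.d (α * β * γ) = ((-1 : ℝ) ^ ((a + 1) * (b + c))) • (β * γ * G.d α)
      + ((-1 : ℝ) ^ (a + (b + 1) * c + a * c)) • (γ * α * G.d β)
      + ((-1 : ℝ) ^ (a + b)) • (α * β * G.d γ) := by
  have hdα := G.d_grade a α hα
  have hdβ := G.d_grade b β hβ
  have hβγ := G.mul_mem b c β hβ γ hγ
  have swap_dα : G.d α * (β * γ) = ((-1 : ℝ) ^ ((a + 1) * (b + c))) • (β * γ * G.d α) :=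
    G.comm _ _ _ _ hdα hβγ
  have swap_dβ : α * (G.d β * γ) = ((-1 : ℝ) ^ ((b + 1) * c + a * c)) • (γ * α * G.d β) := by
    rw [G.comm _ _ _ _ hdβ hγ, mul_smul_comm, ← mul_assoc, G.comm _ _ _ _ hα hγ, smul_mul_assoc,
      smul_smul, pow_add]
  rw [mul_assoc, G.leibniz a α _ hα, G.leibniz b β γ hβ, mul_add, mul_smul_comm, swap_dα,
    swap_dβ, ← mul_assoc]
  match_scalars <;> simp only [mul_one, ← pow_add, add_assoc]

theorem br_jacobi (hα : α ∈ G.grading a) (hβ : β ∈ G.grading b) (hγ : γ ∈ G.grading c) :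
    ((-1 : ℝ) ^ ((a + 1) * (c + 1))) • G.br (a + b + 1) (G.br a α β) γ
      + ((-1 : ℝ) ^ ((b + 1) * (a + 1))) • G.br (b + c + 1) (G.br b β γ) α
      + ((-1 : ℝ) ^ ((c + 1) * (b + 1))) • G.br (c + a + 1) (G.br c γ α) β = 0 := by
  calc _ = G.d (((-1 : ℝ) ^ (a * c + a + b + c + 1)) • G.d (α * β * γ)) := by
        rw [G.br_br hα hβ, G.br_br hβ hγ, G.br_br hγ hα, G.d_mul_mul hα hβ hγ]
        simp only [map_add, map_smul, smul_smul]
        match_scalars <;> simp only [mul_one, ← pow_add] <;> exact neg_one_pow_congr (by grind)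
    _ = 0 := by rw [map_smul, G.d_d, smul_zero]

end GradedCommDiffAlgebra

/-- With the bracket `[α, β] = (−1)^a d(αβ)` and the shifted degree `−(a+1)`
assigned to `A_a`, the algebra of forms becomes a ℤ-graded Lie superalgebra:
the bracket of `A_a` and `A_b` lands in `A_{a+b+1}`, it is graded-antisymmetric
with signs `(−1)^{(a+1)(b+1)}`, and it satisfies the graded Jacobi identity. -/
theorem forms_lie_superalgebra {A : Type*} [Ring A] [Algebra ℝ A]
    (G : GradedCommDiffAlgebra A) :
    (∀ (a b : ℕ) (α β : A), α ∈ G.grading a → β ∈ G.grading b →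
      G.br a α β ∈ G.grading (a + b + 1)) ∧
    (∀ (a b : ℕ) (α β : A), α ∈ G.grading a → β ∈ G.grading b →
      G.br a α β + ((-1 : ℝ) ^ ((a + 1) * (b + 1))) • G.br b β α = 0) ∧
    (∀ (a b c : ℕ) (α β γ : A),
      α ∈ G.grading a → β ∈ G.grading b → γ ∈ G.grading c →
      ((-1 : ℝ) ^ ((a + 1) * (c + 1))) • G.br (a + b + 1) (G.br a α β) γ
        + ((-1 : ℝ) ^ ((b + 1) * (a + 1))) • G.br (b + c + 1) (G.br b β γ) α
        + ((-1 : ℝ) ^ ((c + 1) * (b + 1))) • G.br (c + a + 1) (G.br c γ α) β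
        = 0) := by
  exact ⟨fun _ _ _ _ ↦ G.br_mem, fun _ _ _ _ ↦ G.br_add_smul_br,
    fun _ _ _ _ _ _ ↦ G.br_jacobi⟩
end

section
/- Let u, c₂, c₃, c₅, c₆, c₈ be real numbers with c₈ ≠ 0 and u + 1 ≠ 0. Then: (1) the 1×10 matrix (0, 0, 0, 0, c₂, u·c₃, 0, c₂+c₅, c₃+u·c₆, c₈(u+1)) has rank 1; (2) the 5×5 matrix with rows (0, −c₅, −u·c₆, −(u+1)c₈, −c₈), (0, c₂, u·c₃, 0, −(u+1)c₈), (0, (−c₂c₆+c₃c₅)/c₈, 0, (u+1)c₃, c₃+(u+1)c₆), (0, 0, −u(c₂c₆−c₃c₅)/c₈, −(u+1)c₂, −c₂−(u+1)c₅), (0, 0, 0, 0, 0) has rank 2; and (3) the 10×1 column vector (u+1)·(c₈, −c₆, c₅, 0, c₃, −c₂, 0, (c₂c₆−c₃c₅)/c₈, 0, 0)ᵀ has rank 1. -/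
/-- Ranks of the matrix representations `A(0,3)`, `A(1,4)`, `A(2,5)` of the
Poisson-like coboundary operator associated with a 2-form on the dual
superalgebra of the 5-dimensional Lie algebra of Type[8]: under `c₈ ≠ 0` and
`u + 1 ≠ 0`, the ranks are 1, 2 and 1 respectively. -/
theorem rank_type8_matrices (u c₂ c₃ c₅ c₆ c₈ : ℝ)
    (hc₈ : c₈ ≠ 0) (hu : u + 1 ≠ 0) :
    let A03 : Matrix (Fin 1) (Fin 10) ℝ :=
      !![0, 0, 0, 0, c₂, u * c₃, 0, c₂ + c₅, c₃ + u * c₆, c₈ * (u + 1)]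
    let A14 : Matrix (Fin 5) (Fin 5) ℝ :=
      !![0, -c₅, -u * c₆, -(u + 1) * c₈, -c₈;
         0, c₂, u * c₃, 0, -(u + 1) * c₈;
         0, (-c₂ * c₆ + c₃ * c₅) / c₈, 0, (u + 1) * c₃, c₃ + (u + 1) * c₆;
         0, 0, -u * (c₂ * c₆ - c₃ * c₅) / c₈, -(u + 1) * c₂, -c₂ - (u + 1) * c₅;
         0, 0, 0, 0, 0]
    let A25 : Matrix (Fin 10) (Fin 1) ℝ :=
      (u + 1) • !![c₈; -c₆; c₅; 0; c₃; -c₂; 0; (c₂ * c₆ - c₃ * c₅) / c₈; 0; 0]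
    A03.rank = 1 ∧ A14.rank = 2 ∧ A25.rank = 1 := by
  intro A03 A14 A25
  have hdet : (c₈ * (u + 1)) ≠ 0 := mul_ne_zero hc₈ hu
  refine ⟨?_, ?_, ?_⟩
  · -- A03
    have h1 : (!![c₈ * (u + 1)] : Matrix (Fin 1) (Fin 1) ℝ).rank = 1 := by
      rw [Matrix.rank_of_isUnit, Fintype.card_fin]
      rw [Matrix.isUnit_iff_isUnit_det, Matrix.det_fin_one_of]
      exact hdet.isUnit
    have hQ : A03 * (!![0;0;0;0;0;0;0;0;0;1] : Matrix (Fin 10) (Fin 1) ℝ) =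
        !![c₈ * (u + 1)] := by
      ext i j
      fin_cases i; fin_cases j
      simp [Matrix.mul_apply, Fin.sum_univ_succ, Matrix.vecHead, Matrix.vecTail, A03]
    have := Matrix.rank_mul_le_left A03 (!![0;0;0;0;0;0;0;0;0;1] : Matrix (Fin 10) (Fin 1) ℝ)
    rw [hQ, h1] at this
    exact le_antisymm A03.rank_le_card_height this
  · -- A14
    have hle : A14.rank ≤ 2 := by
      have hfac : A14 =
          (!![1,0;0,1;-c₃/c₈,-c₆/c₈;c₂/c₈,c₅/c₈;0,0] : Matrix (Fin 5) (Fin 2) ℝ) *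
          (!![0,-c₅,-u*c₆,-(u+1)*c₈,-c₈; 0,c₂,u*c₃,0,-(u+1)*c₈] :
            Matrix (Fin 2) (Fin 5) ℝ) := by
        ext i j
        fin_cases i <;> fin_cases j <;>
          simp [Matrix.mul_apply, Fin.sum_univ_succ, Matrix.vecHead, Matrix.vecTail, A14] <;>
          (try field_simp) <;> ring
      rw [hfac]
      exact le_trans (Matrix.rank_mul_le_left _ _)
        (le_trans (Matrix.rank_le_card_width _) (by simp))
    have hge : 2 ≤ A14.rank := by
      have hM : (!![-(u+1)*c₈, -c₈; 0, -(u+1)*c₈] : Matrix (Fin 2) (Fin 2) ℝ).rank = 2 := by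
        rw [Matrix.rank_of_isUnit, Fintype.card_fin]
        rw [Matrix.isUnit_iff_isUnit_det, Matrix.det_fin_two_of]
        have h2 : -(u+1)*c₈ ≠ 0 := by
          intro h; exact hdet (by nlinarith [h])
        exact (by simpa using mul_ne_zero h2 h2 : (-(u+1)*c₈ * (-(u+1)*c₈) - -c₈ * 0) ≠ 0).isUnit
      have hfac : (!![1,0,0,0,0;0,1,0,0,0] : Matrix (Fin 2) (Fin 5) ℝ) *
          (A14 * (!![0,0;0,0;0,0;1,0;0,1] : Matrix (Fin 5) (Fin 2) ℝ)) =
          !![-(u+1)*c₈, -c₈; 0, -(u+1)*c₈] := by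
        ext i j
        fin_cases i <;> fin_cases j <;>
          simp [Matrix.mul_apply, Fin.sum_univ_succ, Matrix.vecHead, Matrix.vecTail, A14]
      calc 2 = (!![-(u+1)*c₈, -c₈; 0, -(u+1)*c₈] : Matrix (Fin 2) (Fin 2) ℝ).rank := hM.symm
        _ ≤ (A14 * (!![0,0;0,0;0,0;1,0;0,1] : Matrix (Fin 5) (Fin 2) ℝ)).rank := by
            rw [← hfac]; exact Matrix.rank_mul_le_right _ _
        _ ≤ A14.rank := Matrix.rank_mul_le_left _ _
    omega
  · -- A25
    have h1 : (!![(u + 1) * c₈] : Matrix (Fin 1) (Fin 1) ℝ).rank = 1 := by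
      rw [Matrix.rank_of_isUnit, Fintype.card_fin]
      rw [Matrix.isUnit_iff_isUnit_det, Matrix.det_fin_one_of]
      exact (mul_ne_zero hu hc₈).isUnit
    have hP : (!![1,0,0,0,0,0,0,0,0,0] : Matrix (Fin 1) (Fin 10) ℝ) * A25 =
        !![(u + 1) * c₈] := by
      ext i j
      fin_cases i; fin_cases j
      simp [Matrix.mul_apply, Fin.sum_univ_succ, Matrix.vecHead, Matrix.vecTail, A25]
    have := Matrix.rank_mul_le_right (!![1,0,0,0,0,0,0,0,0,0] : Matrix (Fin 1) (Fin 10) ℝ) A25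
    rw [hP, h1] at this
    exact le_antisymm A25.rank_le_card_width this
end
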